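/- arXiv:2102.08966 — 4 statements merged into one kernel-verified Lean document; each statement's English description precedes it below -/
import Mathlib

section
/- Let Ω be a finite nonempty set with a probability distribution P (nonnegative weights summing to 1, with P extended additively to subsets). Let P_A and P_B be partitions of Ω such that every nonempty intersection of a cell of P_A with a cell of P_B has positive probability, and let E_A, E_B ⊆ Ω be events with P(E_A \ E_B) = P(E_B \ E_A) = 0 (perfectly correlated events). Fix q_A, q_B ∈ [0,1] and define A₀ = {ω ∈ Ω : P(E_B ∩ P_A(ω)) = q_A·P(P_A(ω))}, B₀ = {ω ∈ Ω : P(E_A ∩ P_B(ω)) = q_B·P(P_B(ω))}, and recursively A_{n+1} = {ω ∈ A_n : P(B_n ∩ P_A(ω)) = P(P_A(ω))}, B_{n+1} = {ω ∈ B_n : P(A_n ∩ P_B(ω)) = P(P_B(ω))}, where P_A(ω) (respectively P_B(ω)) denotes the cell of P_A (respectively P_B) containing ω. If there exists ω* ∈ Ω such that ω* ∈ A_n ∩ B_n for every n ∈ ℕ, then q_A = q_B. -/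
/-! Let `C = ⋂ₙ Aₙ`. Since `Bₙ` is a union of Bob's cells and every join cell has positive
probability, Alice's certainty of `Bₙ` at `ω ∈ C` forces her whole cell into `Bₙ`; hence
`C = ⋂ₙ Bₙ`, and `C` is a union of cells of both partitions. Summing the defining
equations of `A₀` and `B₀` over the cells contained in `C` gives
`P(E_B ∩ C) = q_A P(C)` and `P(E_A ∩ C) = q_B P(C)`. The left sides agree because the events
are perfectly correlated, and `P(C) > 0` because `ω* ∈ C`. -/

open Classical in
/-- The probability of a set of states of the world: the sum of the weights of its
elements. -/
noncomputable def Pr {Ω : Type*} [Fintype Ω] (P : Ω → ℝ) (S : Set Ω) : ℝ :=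
  ∑ ω, if ω ∈ S then P ω else 0

/-- `cell` assigns to each state the cell of a partition of `Ω` containing it. -/
def IsPartitionMap {Ω : Type*} (cell : Ω → Set Ω) : Prop :=
  (∀ ω, ω ∈ cell ω) ∧ (∀ ω ω', ω' ∈ cell ω → cell ω' = cell ω)

/-- The hierarchy `(A_n, B_n)`: at stage `0`, the states where Alice assigns conditional
probability `qA` to `EB` (resp. Bob assigns `qB` to `EA`) given her (his) partition cell;
at stage `n+1`, additionally each agent is certain that the state lies in the other's
stage-`n` set. -/
noncomputable def ABsets {Ω : Type*} [Fintype Ω] (P : Ω → ℝ)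
    (cellA cellB : Ω → Set Ω) (EA EB : Set Ω) (qA qB : ℝ) :
    ℕ → Set Ω × Set Ω
  | 0 =>
      ({ω | Pr P (EB ∩ cellA ω) = qA * Pr P (cellA ω)},
       {ω | Pr P (EA ∩ cellB ω) = qB * Pr P (cellB ω)})
  | n + 1 =>
      ({ω | ω ∈ (ABsets P cellA cellB EA EB qA qB n).1 ∧
            Pr P ((ABsets P cellA cellB EA EB qA qB n).2 ∩ cellA ω) = Pr P (cellA ω)},
       {ω | ω ∈ (ABsets P cellA cellB EA EB qA qB n).2 ∧
            Pr P ((ABsets P cellA cellB EA EB qA qB n).1 ∩ cellB ω) = Pr P (cellB ω)})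

def IsSaturated {Ω : Type*} (cell : Ω → Set Ω) (S : Set Ω) : Prop :=
  ∀ ω ∈ S, cell ω ⊆ S

section Partition

variable {Ω : Type*} {cell : Ω → Set Ω}

lemma IsPartitionMap.cell_eq_iff (hpart : IsPartitionMap cell) {ω ω' : Ω} :
    cell ω' = cell ω ↔ ω' ∈ cell ω :=
  ⟨fun h => h ▸ hpart.1 ω', hpart.2 ω ω'⟩

lemma IsPartitionMap.mem_cell_symm (hpart : IsPartitionMap cell) {ω ω' : Ω}
    (h : ω' ∈ cell ω) : ω ∈ cell ω' :=
  hpart.cell_eq_iff.1 (hpart.2 ω ω' h).symm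

lemma IsSaturated.mem_of_mem_cell (hpart : IsPartitionMap cell) {S : Set Ω}
    (hS : IsSaturated cell S) {ω ω' : Ω} (hω' : ω' ∈ S) (h : ω' ∈ cell ω) : ω ∈ S :=
  hS ω' hω' (hpart.mem_cell_symm h)

end Partition

section Pr

open Classical

variable {Ω : Type*} [Fintype Ω] {P : Ω → ℝ}

lemma Pr_mono (hP0 : ∀ ω, 0 ≤ P ω) {S T : Set Ω} (h : S ⊆ T) : Pr P S ≤ Pr P T := by
  unfold Pr
  gcongr with ω
  split_ifs with hS hT
  exacts [le_rfl, absurd (h hS) hT, hP0 ω, le_rfl]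

lemma Pr_inter_add_diff (S T : Set Ω) : Pr P (S ∩ T) + Pr P (S \ T) = Pr P S := by
  simp only [Pr, ← Finset.sum_add_distrib]
  refine Finset.sum_congr rfl fun ω _ => ?_
  by_cases hS : ω ∈ S <;> by_cases hT : ω ∈ T <;> simp [hS, hT]

lemma Pr_diff_eq_zero_of_Pr_inter_eq {S T : Set Ω} (h : Pr P (S ∩ T) = Pr P S) :
    Pr P (S \ T) = 0 := by
  linarith [Pr_inter_add_diff (P := P) S T]

lemma Pr_inter_le_of_Pr_diff_eq_zero (hP0 : ∀ ω, 0 ≤ P ω) {S T : Set Ω}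
    (h : Pr P (S \ T) = 0) (U : Set Ω) : Pr P (S ∩ U) ≤ Pr P (T ∩ U) := by
  have hsplit := Pr_inter_add_diff (P := P) (S ∩ U) T
  have hin := Pr_mono hP0 (show S ∩ U ∩ T ⊆ T ∩ U from fun x hx => ⟨hx.2, hx.1.2⟩)
  have hout := Pr_mono hP0 (show (S ∩ U) \ T ⊆ S \ T from fun x hx => ⟨hx.1.1, hx.2⟩)
  linarith

lemma Pr_eq_sum_cells {cell : Ω → Set Ω} (hpart : IsPartitionMap cell) (S : Set Ω) :
    Pr P S = ∑ c ∈ Finset.univ.image cell, Pr P (S ∩ c) := by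
  rw [Pr, ← Finset.sum_fiberwise_of_maps_to (g := cell)
    (fun ω _ => Finset.mem_image_of_mem cell (Finset.mem_univ ω))]
  refine Finset.sum_congr rfl ?_
  simp only [Finset.mem_image, Finset.mem_univ, true_and]
  rintro _ ⟨ω, rfl⟩
  rw [Finset.sum_filter, Pr]
  refine Finset.sum_congr rfl fun ω' _ => ?_
  simp only [hpart.cell_eq_iff, Set.mem_inter_iff]
  by_cases h : ω' ∈ cell ω <;> simp [h, and_comm]

/-- The law of total probability, with conditional probabilities written multiplicatively. -/
lemma Pr_inter_eq_mul_of_isSaturated {cell : Ω → Set Ω} (hpart : IsPartitionMap cell)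
    {C E : Set Ω} (hC : IsSaturated cell C) {q : ℝ}
    (h : ∀ ω ∈ C, Pr P (E ∩ cell ω) = q * Pr P (cell ω)) :
    Pr P (E ∩ C) = q * Pr P C := by
  rw [Pr_eq_sum_cells hpart (E ∩ C), Pr_eq_sum_cells hpart C, Finset.mul_sum]
  refine Finset.sum_congr rfl ?_
  simp only [Finset.mem_image, Finset.mem_univ, true_and]
  rintro _ ⟨ω, rfl⟩
  by_cases hω : ω ∈ C
  · rw [Set.inter_assoc, Set.inter_eq_right.2 (hC ω hω), h ω hω]
  · have hdisj : C ∩ cell ω = ∅ :=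
      Set.eq_empty_of_forall_notMem fun x hx => hω (hC.mem_of_mem_cell hpart hx.1 hx.2)
    simp [Set.inter_assoc, hdisj, Pr]

lemma subset_of_Pr_inter_eq (hP0 : ∀ ω, 0 ≤ P ω) {cell : Ω → Set Ω}
    (hpart : IsPartitionMap cell) {S X : Set Ω} (hS : IsSaturated cell S)
    (hpos : ∀ ω ∈ X, 0 < Pr P (X ∩ cell ω)) (h : Pr P (S ∩ X) = Pr P X) : X ⊆ S := by
  intro ω hωX
  by_contra hωS
  have hsub : X ∩ cell ω ⊆ X \ S := fun x hx =>
    ⟨hx.1, fun hxS => hωS (hS.mem_of_mem_cell hpart hxS hx.2)⟩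
  have hnull : Pr P (X \ S) = 0 :=
    Pr_diff_eq_zero_of_Pr_inter_eq (by rwa [Set.inter_comm])
  linarith [hpos ω hωX, Pr_mono hP0 hsub]

end Pr

section ABsets

variable {Ω : Type*} [Fintype Ω] {P : Ω → ℝ} {cellA cellB : Ω → Set Ω} {EA EB : Set Ω}
  {qA qB : ℝ}

lemma isSaturated_ABsets_fst (hpartA : IsPartitionMap cellA) (n : ℕ) :
    IsSaturated cellA (ABsets P cellA cellB EA EB qA qB n).1 := by
  intro ω hω ω' hω'
  have hc : cellA ω' = cellA ω := hpartA.2 ω ω' hω'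
  induction n with
  | zero => simpa [ABsets, hc] using hω
  | succ n ih => simpa [ABsets, hc] using ⟨ih hω.1, hω.2⟩

lemma isSaturated_ABsets_snd (hpartB : IsPartitionMap cellB) (n : ℕ) :
    IsSaturated cellB (ABsets P cellA cellB EA EB qA qB n).2 := by
  intro ω hω ω' hω'
  have hc : cellB ω' = cellB ω := hpartB.2 ω ω' hω'
  induction n with
  | zero => simpa [ABsets, hc] using hω
  | succ n ih => simpa [ABsets, hc] using ⟨ih hω.1, hω.2⟩

lemma cellA_subset_iInter_ABsets_snd (hP0 : ∀ ω, 0 ≤ P ω) (hpartB : IsPartitionMap cellB)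
    (hjoin : ∀ ω ω', (cellA ω ∩ cellB ω').Nonempty → 0 < Pr P (cellA ω ∩ cellB ω'))
    {ω : Ω} (hω : ∀ n, ω ∈ (ABsets P cellA cellB EA EB qA qB n).1) :
    cellA ω ⊆ ⋂ n, (ABsets P cellA cellB EA EB qA qB n).2 :=
  Set.subset_iInter fun n => subset_of_Pr_inter_eq hP0 hpartB (isSaturated_ABsets_snd hpartB n)
    (fun ω' hω' => hjoin ω ω' ⟨ω', hω', hpartB.1 ω'⟩) (hω (n + 1)).2

lemma cellB_subset_iInter_ABsets_fst (hP0 : ∀ ω, 0 ≤ P ω) (hpartA : IsPartitionMap cellA)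
    (hjoin : ∀ ω ω', (cellA ω ∩ cellB ω').Nonempty → 0 < Pr P (cellA ω ∩ cellB ω'))
    {ω : Ω} (hω : ∀ n, ω ∈ (ABsets P cellA cellB EA EB qA qB n).2) :
    cellB ω ⊆ ⋂ n, (ABsets P cellA cellB EA EB qA qB n).1 :=
  Set.subset_iInter fun n => subset_of_Pr_inter_eq hP0 hpartA (isSaturated_ABsets_fst hpartA n)
    (fun ω' hω' => Set.inter_comm (cellA ω') _ ▸ hjoin ω' ω ⟨ω', hpartA.1 ω', hω'⟩)
    (hω (n + 1)).2

end ABsets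

theorem classical_agreement_theorem_general
    {Ω : Type*} [Fintype Ω]
    (P : Ω → ℝ) (hP0 : ∀ ω, 0 ≤ P ω)
    (cellA cellB : Ω → Set Ω)
    (hpartA : IsPartitionMap cellA) (hpartB : IsPartitionMap cellB)
    (hjoin : ∀ ω ω', (cellA ω ∩ cellB ω').Nonempty → 0 < Pr P (cellA ω ∩ cellB ω'))
    (EA EB : Set Ω)
    (hcorr1 : Pr P (EA \ EB) = 0) (hcorr2 : Pr P (EB \ EA) = 0)
    (qA qB : ℝ)
    (ωstar : Ω)
    (hcc : ∀ n : ℕ, ωstar ∈ (ABsets P cellA cellB EA EB qA qB n).1 ∩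
                             (ABsets P cellA cellB EA EB qA qB n).2) :
    qA = qB := by
  set A := ⋂ n, (ABsets P cellA cellB EA EB qA qB n).1
  set B := ⋂ n, (ABsets P cellA cellB EA EB qA qB n).2
  have hAB : ∀ ω ∈ A, cellA ω ⊆ B := fun ω hω =>
    cellA_subset_iInter_ABsets_snd hP0 hpartB hjoin (Set.mem_iInter.1 hω)
  have hBA : ∀ ω ∈ B, cellB ω ⊆ A := fun ω hω =>
    cellB_subset_iInter_ABsets_fst hP0 hpartA hjoin (Set.mem_iInter.1 hω)
  have hA_eq_B : A = B :=
    Set.Subset.antisymm (fun ω hω => hAB ω hω (hpartA.1 ω)) fun ω hω => hBA ω hω (hpartB.1 ω)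
  have hsatA : IsSaturated cellA A := hA_eq_B ▸ hAB
  have hsatB : IsSaturated cellB A := fun ω hω => hBA ω (hA_eq_B ▸ hω)
  have hPrEB : Pr P (EB ∩ A) = qA * Pr P A :=
    Pr_inter_eq_mul_of_isSaturated hpartA hsatA fun ω hω => Set.mem_iInter.1 hω 0
  have hPrEA : Pr P (EA ∩ A) = qB * Pr P A :=
    Pr_inter_eq_mul_of_isSaturated hpartB hsatB fun ω hω =>
      Set.mem_iInter.1 (hA_eq_B ▸ hω : ω ∈ B) 0
  have hPrE : Pr P (EA ∩ A) = Pr P (EB ∩ A) :=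
    (Pr_inter_le_of_Pr_diff_eq_zero hP0 hcorr1 A).antisymm
      (Pr_inter_le_of_Pr_diff_eq_zero hP0 hcorr2 A)
  have hstar : ωstar ∈ A := Set.mem_iInter.2 fun n => (hcc n).1
  have hPrA : 0 < Pr P A :=
    (hjoin ωstar ωstar ⟨ωstar, hpartA.1 ωstar, hpartB.1 ωstar⟩).trans_le
      (Pr_mono hP0 (Set.inter_subset_left.trans (hsatA ωstar hstar)))
  exact mul_right_cancel₀ hPrA.ne' (by rw [← hPrEB, ← hPrEA, hPrE])

/-- Aumann's classical agreement theorem (Theorem 1 of the paper): if it is common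
certainty at some state `ω*` that Alice assigns probability `qA` to `EB` and Bob assigns
probability `qB` to `EA`, where `EA` and `EB` are perfectly correlated events, then
`qA = qB`. -/
theorem classical_agreement_theorem
    {Ω : Type*} [Fintype Ω] [Nonempty Ω]
    (P : Ω → ℝ) (hP0 : ∀ ω, 0 ≤ P ω) (hP1 : (∑ ω, P ω) = 1)
    (cellA cellB : Ω → Set Ω)
    (hpartA : IsPartitionMap cellA) (hpartB : IsPartitionMap cellB)
    (hjoin : ∀ ω ω', (cellA ω ∩ cellB ω').Nonempty → 0 < Pr P (cellA ω ∩ cellB ω'))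
    (EA EB : Set Ω)
    (hcorr1 : Pr P (EA \ EB) = 0) (hcorr2 : Pr P (EB \ EA) = 0)
    (qA qB : ℝ) (hqA : qA ∈ Set.Icc (0:ℝ) 1) (hqB : qB ∈ Set.Icc (0:ℝ) 1)
    (ωstar : Ω)
    (hcc : ∀ n : ℕ, ωstar ∈ (ABsets P cellA cellB EA EB qA qB n).1 ∩
                             (ABsets P cellA cellB EA EB qA qB n).2) :
    qA = qB :=
  classical_agreement_theorem_general P hP0 cellA cellB hpartA hpartB hjoin EA EB hcorr1 hcorr2 qA
    qB ωstar hcc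
end

section
/- Let p be a two-input two-output no-signaling box with p(0,1|1,1) = p(1,0|1,1) = 0 (perfectly correlated outcomes on inputs x=y=1), and suppose Σ_b p(a,b|0,1) > 0 for both a ∈ {0,1}, Σ_a p(a,0|1,0) > 0, and Σ_b p(a,b|0,0) > 0 for both a ∈ {0,1}. Let q_A, q_B ∈ [0,1] be such that p(a,1|0,1) = q_A·Σ_b p(a,b|0,1) for both a = 0,1 (so α₀ = {0,1}), p(1,0|1,0) = q_B·Σ_a p(a,0|1,0), and suppose that for both a = 0,1 one has Σ_{b∈{0}} p(a,b|0,0) = Σ_b p(a,b|0,0) (i.e., both of Alice's outcomes make her certain that Bob's outcome on input y=0 lies in β = {0}). Then q_A = q_B. -/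
open Kronecker ComplexOrder

/-- A (bipartite) box: nonnegative entries, normalized for every input pair. -/
def IsBox {nA nB nX nY : ℕ} (p : Fin nA → Fin nB → Fin nX → Fin nY → ℝ) : Prop :=
  (∀ a b x y, 0 ≤ p a b x y) ∧ (∀ x y, (∑ a, ∑ b, p a b x y) = 1)

/-- No-signaling: each party's marginal does not depend on the other's input. -/
def NoSignaling {nA nB nX nY : ℕ} (p : Fin nA → Fin nB → Fin nX → Fin nY → ℝ) : Prop :=
  (∀ b y x x', (∑ a, p a b x y) = ∑ a, p a b x' y) ∧
  (∀ a x y y', (∑ b, p a b x y) = ∑ b, p a b x y')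

/-- Local (classical) box: a convex mixture of product deterministic/stochastic strategies. -/
def IsLocal {nA nB nX nY : ℕ} (p : Fin nA → Fin nB → Fin nX → Fin nY → ℝ) : Prop :=
  ∃ (Λ : ℕ) (w : Fin Λ → ℝ) (pA : Fin nA → Fin nX → Fin Λ → ℝ)
    (pB : Fin nB → Fin nY → Fin Λ → ℝ),
    (∀ l, 0 ≤ w l) ∧ ((∑ l, w l) = 1) ∧
    (∀ a x l, 0 ≤ pA a x l) ∧ (∀ x l, (∑ a, pA a x l) = 1) ∧
    (∀ b y l, 0 ≤ pB b y l) ∧ (∀ y l, (∑ b, pB b y l) = 1) ∧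
    (∀ a b x y, p a b x y = ∑ l, w l * pA a x l * pB b y l)

/-- Quantum box: realized by POVMs on a bipartite quantum state. -/
def IsQuantum {nA nB nX nY : ℕ} (p : Fin nA → Fin nB → Fin nX → Fin nY → ℝ) : Prop :=
  ∃ (dA dB : ℕ) (_ : 0 < dA) (_ : 0 < dB)
    (ρ : Matrix (Fin dA × Fin dB) (Fin dA × Fin dB) ℂ)
    (E : Fin nX → Fin nA → Matrix (Fin dA) (Fin dA) ℂ)
    (F : Fin nY → Fin nB → Matrix (Fin dB) (Fin dB) ℂ),
    ρ.PosSemidef ∧ ρ.trace = 1 ∧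
    (∀ x a, (E x a).PosSemidef) ∧ (∀ x, (∑ a, E x a) = 1) ∧
    (∀ y b, (F y b).PosSemidef) ∧ (∀ y, (∑ b, F y b) = 1) ∧
    (∀ a b x y, ((E x a ⊗ₖ F y b) * ρ).trace = (p a b x y : ℂ))

open Classical in
/-- The certainty hierarchy `(α_n, β_n)` of the agreement framework:
`α₀` are Alice's outputs (on input `x = 0`) from which she assigns conditional
probability `qA` to Bob outputting `1` on input `y = 1`; `β₀` is the analogue
for Bob; and at each later stage each party is moreover certain (on inputs
`x = y = 0`) that the other's output lies in the previous stage's set. -/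
noncomputable def alphaBeta {nA nB nX nY : ℕ} [NeZero nA] [NeZero nB] [NeZero nX] [NeZero nY]
    (p : Fin nA → Fin nB → Fin nX → Fin nY → ℝ) (qA qB : ℝ) :
    ℕ → Set (Fin nA) × Set (Fin nB)
  | 0 =>
      ({a | 0 < (∑ b, p a b 0 1) ∧ p a 1 0 1 = qA * (∑ b, p a b 0 1)},
       {b | 0 < (∑ a, p a b 1 0) ∧ p 1 b 1 0 = qB * (∑ a, p a b 1 0)})
  | n + 1 =>
      ({a | a ∈ (alphaBeta p qA qB n).1 ∧ 0 < (∑ b, p a b 0 0) ∧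
            (∑ b, if b ∈ (alphaBeta p qA qB n).2 then p a b 0 0 else 0) = ∑ b, p a b 0 0},
       {b | b ∈ (alphaBeta p qA qB n).2 ∧ 0 < (∑ a, p a b 0 0) ∧
            (∑ a, if a ∈ (alphaBeta p qA qB n).1 then p a b 0 0 else 0) = ∑ a, p a b 0 0})

/-- The box gives rise to common certainty of disagreement: for some `qA ≠ qB` in `[0,1]`,
the outputs on inputs `x = y = 1` are perfectly correlated, the event
`(a,b,x,y) = (0,0,0,0)` has positive probability, and `0 ∈ α_n`, `0 ∈ β_n` for every `n`. -/
def CommonCertaintyOfDisagreement {nA nB nX nY : ℕ}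
    [NeZero nA] [NeZero nB] [NeZero nX] [NeZero nY]
    (p : Fin nA → Fin nB → Fin nX → Fin nY → ℝ) : Prop :=
  ∃ qA qB : ℝ, qA ∈ Set.Icc (0:ℝ) 1 ∧ qB ∈ Set.Icc (0:ℝ) 1 ∧ qA ≠ qB ∧
    (∀ (a : Fin nA) (b : Fin nB), (a : ℕ) ≠ (b : ℕ) → p a b 1 1 = 0) ∧ 0 < p 0 0 0 0 ∧
    (∀ n : ℕ, (0 : Fin nA) ∈ (alphaBeta p qA qB n).1 ∧ (0 : Fin nB) ∈ (alphaBeta p qA qB n).2)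

/-- The box gives rise to singular disagreement: perfectly correlated outputs on inputs
`x = y = 1`, positive probability of `(0,0,0,0)`, Alice assigns conditional probability
`qA = 1` to `b = 1` given `a = 0, x = 0, y = 1`, and Bob assigns conditional probability
`qB = 0` to `a = 1` given `b = 0, x = 1, y = 0`. -/
def SingularDisagreement {nA nB nX nY : ℕ}
    [NeZero nA] [NeZero nB] [NeZero nX] [NeZero nY]
    (p : Fin nA → Fin nB → Fin nX → Fin nY → ℝ) : Prop :=
  (∀ (a : Fin nA) (b : Fin nB), (a : ℕ) ≠ (b : ℕ) → p a b 1 1 = 0) ∧ 0 < p 0 0 0 0 ∧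
  (0 < ∑ b, p 0 b 0 1) ∧ (p 0 1 0 1 = ∑ b, p 0 b 0 1) ∧
  (0 < ∑ a, p a 0 1 0) ∧ (p 1 0 1 0 = 0)


/-! Summing Alice's condition over her outcomes shows that `q_A` is Bob's marginal probability
of `b = 1` on input `y = 1`. Bob's outcome on `y = 0` is `0` with certainty, so `q_B` is Alice's
marginal probability of `a = 1` on input `x = 1`. Perfect correlation on inputs `x = y = 1`
makes these two marginals equal. -/

section Boxes

variable {nA nB nX nY : ℕ} {p : Fin nA → Fin nB → Fin nX → Fin nY → ℝ}

theorem IsBox.sum_fst_eq_of_forall_eq_mul (hp : IsBox p) {b : Fin nB} {x : Fin nX}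
    {y : Fin nY} {q : ℝ} (h : ∀ a, p a b x y = q * ∑ b', p a b' x y) :
    ∑ a, p a b x y = q := by
  simp_rw [h, ← Finset.mul_sum, hp.2, mul_one]

theorem IsBox.sum_fst_eq_one_of_forall_ne_eq_zero (hp : IsBox p) {b₀ : Fin nB} {x : Fin nX}
    {y : Fin nY} (h : ∀ a, ∀ b ≠ b₀, p a b x y = 0) :
    ∑ a, p a b₀ x y = 1 := by
  rw [← hp.2 x y]
  exact Finset.sum_congr rfl fun a _ => (Fintype.sum_eq_single b₀ (h a)).symm

theorem NoSignaling.eq_zero_of_forall_eq_zero (hns : NoSignaling p) (hp : IsBox p)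
    {b : Fin nB} {x : Fin nX} {y : Fin nY} (h : ∀ a, p a b x y = 0) (x' : Fin nX) (a : Fin nA) :
    p a b x' y = 0 := by
  have hsum : ∑ a, p a b x' y = 0 := by
    rw [hns.1 b y x' x]
    exact Finset.sum_eq_zero fun a _ => h a
  exact (Finset.sum_eq_zero_iff_of_nonneg fun a _ => hp.1 a b x' y).1 hsum a (Finset.mem_univ a)

end Boxes

theorem sum_fst_eq_sum_snd_of_cross_eq_zero {n nX nY : ℕ}
    {p : Fin n → Fin n → Fin nX → Fin nY → ℝ} {c : Fin n} {x : Fin nX} {y : Fin nY}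
    (hcol : ∀ a ≠ c, p a c x y = 0) (hrow : ∀ b ≠ c, p c b x y = 0) :
    ∑ a, p a c x y = ∑ b, p c b x y := by
  rw [Fintype.sum_eq_single c hcol, Fintype.sum_eq_single c hrow]

theorem full_alpha_certain_beta_implies_agreement_general
    (p : Fin 2 → Fin 2 → Fin 2 → Fin 2 → ℝ)
    (hbox : IsBox p) (hns : NoSignaling p)
    (hpc1 : p 0 1 1 1 = 0) (hpc2 : p 1 0 1 1 = 0)
    (qA qB : ℝ)
    (hA : ∀ a, p a 1 0 1 = qA * (∑ b, p a b 0 1))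
    (hB : p 1 0 1 0 = qB * (∑ a, p a 0 1 0))
    (hcert : ∀ a, p a 0 0 0 = ∑ b, p a b 0 0) :
    qA = qB := by
  have hnever₀ : ∀ a, p a 1 0 0 = 0 := fun a => by
    simpa [Fin.sum_univ_two] using hcert a
  have hnever₁ : ∀ a, p a 1 1 0 = 0 := hns.eq_zero_of_forall_eq_zero hbox hnever₀ 1
  have hBob : ∑ a, p a 0 1 0 = 1 := hbox.sum_fst_eq_one_of_forall_ne_eq_zero fun a b hb => by
    rw [Fin.eq_one_of_ne_zero b hb, hnever₁]
  calc qA = ∑ a, p a 1 0 1 := (hbox.sum_fst_eq_of_forall_eq_mul hA).symm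
    _ = ∑ a, p a 1 1 1 := hns.1 1 1 0 1
    _ = ∑ b, p 1 b 1 1 := sum_fst_eq_sum_snd_of_cross_eq_zero
          (by simpa [Fin.forall_fin_two] using hpc1) (by simpa [Fin.forall_fin_two] using hpc2)
    _ = ∑ b, p 1 b 1 0 := hns.2 1 1 1 0
    _ = p 1 0 1 0 := by rw [Fin.sum_univ_two, hnever₁, add_zero]
    _ = qB := by rw [hB, hBob, mul_one]

/-- Case 2 of the proof of Theorem 3 of the paper: if `α₀ = {0,1}` and both of Alice's
outcomes make her certain (on inputs `x = y = 0`) that Bob's outcome is `0`, then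
perfect correlation at inputs `x = y = 1` forces `qA = qB`. -/
theorem full_alpha_certain_beta_implies_agreement
    (p : Fin 2 → Fin 2 → Fin 2 → Fin 2 → ℝ)
    (hbox : IsBox p) (hns : NoSignaling p)
    (hpc1 : p 0 1 1 1 = 0) (hpc2 : p 1 0 1 1 = 0)
    (hmA : ∀ a, 0 < ∑ b, p a b 0 1)
    (hmB : 0 < ∑ a, p a 0 1 0)
    (hm0 : ∀ a, 0 < ∑ b, p a b 0 0)
    (qA qB : ℝ) (hqA : qA ∈ Set.Icc (0:ℝ) 1) (hqB : qB ∈ Set.Icc (0:ℝ) 1)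
    (hA : ∀ a, p a 1 0 1 = qA * (∑ b, p a b 0 1))
    (hB : p 1 0 1 0 = qB * (∑ a, p a 0 1 0))
    (hcert : ∀ a, p a 0 0 0 = ∑ b, p a b 0 0) :
    qA = qB :=
  full_alpha_certain_beta_implies_agreement_general p hbox hns hpc1 hpc2 qA qB hA hB hcert
end

section
/- Let p be a two-input two-output quantum box and for x,y ∈ {0,1} define the correlators c_{xy} = p(0,0|x,y) + p(1,1|x,y) − p(0,1|x,y) − p(1,0|x,y). If c_{00} = 1 and c_{11} = 1, then c_{01} = c_{10}. In particular, a quantum box with p(0,1|0,0) = p(1,0|0,0) = 0 and p(0,1|1,1) = p(1,0|1,1) = 0 satisfies p(0,1|0,1) − p(0,1|1,0) = p(0,0|0,0) − p(0,0|1,1). -/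
open Kronecker ComplexOrder

/-!
With the `±1` observables `Aₓ = Eₓ⁰ - Eₓ¹` and `B_y = F_y⁰ - F_y¹`, put `Wₓ = Aₓ ⊗ 1` and
`X_y = 1 ⊗ B_y`: Hermitian contractions with every `Wₓ` commuting with every `X_y`, so that
`Wₓ X_y ≤ 1`. A correlator `tr (Wₓ X_y ρ) = tr ρ` then forces `Wₓ X_y ρ = ρ`, since the positive
matrix `1 - Wₓ X_y` has zero trace against `ρ`; and then `X_y² ρ = ρ`, squeezed between
`Wₓ² X_y² ≤ X_y² ≤ 1`. Inserting the stabilisers `W₁ X₁` and `W₀ X₀` of `ρ` under the trace gives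
`tr (W₀ X₁ ρ) = tr (W₀ W₁ ρ) = tr (W₁ X₀ ρ)`. The second claim follows from the first by
normalisation and no-signalling.
-/

open Matrix
open scoped MatrixOrder

namespace Matrix

section KroneckerAlgebra

variable {α l m n p : Type*}

lemma sub_kronecker [Ring α] (A B : Matrix l m α) (C : Matrix n p α) :
    (A - B) ⊗ₖ C = A ⊗ₖ C - B ⊗ₖ C := by
  ext; simp [sub_mul]

lemma kronecker_sub [Ring α] (A : Matrix l m α) (B C : Matrix n p α) :
    A ⊗ₖ (B - C) = A ⊗ₖ B - A ⊗ₖ C := by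
  ext; simp [mul_sub]

lemma sum_kronecker [NonUnitalNonAssocSemiring α] {ι : Type*} (s : Finset ι)
    (A : ι → Matrix l m α) (B : Matrix n p α) : (∑ i ∈ s, A i) ⊗ₖ B = ∑ i ∈ s, A i ⊗ₖ B := by
  ext; simp [sum_apply, Finset.sum_mul]

lemma kronecker_sum [NonUnitalNonAssocSemiring α] {ι : Type*} (s : Finset ι)
    (A : Matrix l m α) (B : ι → Matrix n p α) : A ⊗ₖ (∑ i ∈ s, B i) = ∑ i ∈ s, A ⊗ₖ B i := by
  ext; simp [sum_apply, Finset.mul_sum]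

lemma IsHermitian.kronecker [CommSemiring α] [StarRing α] {A : Matrix m m α} {B : Matrix n n α}
    (hA : A.IsHermitian) (hB : B.IsHermitian) : (A ⊗ₖ B).IsHermitian := by
  rw [IsHermitian, conjTranspose_kronecker, hA.eq, hB.eq]

end KroneckerAlgebra

variable {𝕜 m n : Type*} [RCLike 𝕜] [Fintype m] [Fintype n]

lemma PosSemidef.trace_mul_nonneg {A B : Matrix n n 𝕜} (hA : A.PosSemidef)
    (hB : B.PosSemidef) : 0 ≤ (A * B).trace := by
  classical
  obtain ⟨S, rfl⟩ := CStarAlgebra.nonneg_iff_eq_star_mul_self.mp hA.nonneg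
  rw [star_eq_conjTranspose, Matrix.mul_assoc, trace_mul_comm]
  exact (hB.mul_mul_conjTranspose_same S).trace_nonneg

lemma PosSemidef.mul_eq_zero_of_trace_mul_eq_zero {A B : Matrix n n 𝕜} (hA : A.PosSemidef)
    (hB : B.PosSemidef) (h : (A * B).trace = 0) : A * B = 0 := by
  classical
  obtain ⟨S, rfl⟩ := CStarAlgebra.nonneg_iff_eq_star_mul_self.mp hA.nonneg
  obtain ⟨T, rfl⟩ := CStarAlgebra.nonneg_iff_eq_mul_star_self.mp hB.nonneg
  simp only [star_eq_conjTranspose] at h ⊢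
  have hST : S * T = 0 := by
    rw [← trace_conjTranspose_mul_self_eq_zero_iff, ← h, conjTranspose_mul, trace_mul_comm,
      Matrix.mul_assoc Sᴴ, trace_mul_comm Sᴴ]
    simp only [Matrix.mul_assoc]
  rw [Matrix.mul_assoc, ← Matrix.mul_assoc S, hST, Matrix.zero_mul, Matrix.mul_zero]

lemma kronecker_le_kronecker_left {A B : Matrix m m 𝕜} {C : Matrix n n 𝕜} (hAB : A ≤ B)
    (hC : 0 ≤ C) : A ⊗ₖ C ≤ B ⊗ₖ C := by
  rw [le_iff, ← sub_kronecker]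
  exact (le_iff.mp hAB).kronecker hC.posSemidef

lemma kronecker_le_kronecker_right {A : Matrix m m 𝕜} {B C : Matrix n n 𝕜} (hA : 0 ≤ A)
    (hBC : B ≤ C) : A ⊗ₖ B ≤ A ⊗ₖ C := by
  rw [le_iff, ← kronecker_sub]
  exact hA.posSemidef.kronecker (le_iff.mp hBC)

variable [DecidableEq n]

lemma sub_mul_self_le_one_of_add_eq_one {P Q : Matrix n n 𝕜} (hP : 0 ≤ P) (hQ : 0 ≤ Q)
    (h : P + Q = 1) : (P - Q) * (P - Q) ≤ 1 := by
  obtain rfl : Q = 1 - P := eq_sub_of_add_eq' h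
  have hPQ : 0 ≤ P * (1 - P) :=
    Commute.mul_nonneg hP hQ ((Commute.one_right P).sub_right (Commute.refl P))
  rw [← sub_nonneg, show 1 - (P - (1 - P)) * (P - (1 - P)) = 4 • (P * (1 - P)) by noncomm_ring]
  exact nsmul_nonneg hPQ 4

lemma mul_le_one_of_commute {W X : Matrix n n 𝕜} (hW : W.IsHermitian) (hX : X.IsHermitian)
    (hW1 : W * W ≤ 1) (hX1 : X * X ≤ 1) (hWX : Commute W X) : W * X ≤ 1 := by
  have key : 1 - W * X = (2⁻¹ : ℝ) • ((W - X) * (W - X) + (1 - W * W) + (1 - X * X)) := by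
    simp only [sub_mul, mul_sub, hWX.eq.symm]
    module
  rw [← sub_nonneg, key]
  exact smul_nonneg (by norm_num) (add_nonneg (add_nonneg
    (hW.sub hX).isSelfAdjoint.mul_self_nonneg (sub_nonneg.mpr hW1)) (sub_nonneg.mpr hX1))

lemma mul_eq_self_of_le_one_of_trace_mul_eq {M ρ : Matrix n n 𝕜} (hρ : ρ.PosSemidef)
    (hM : M ≤ 1) (h : (M * ρ).trace = ρ.trace) : M * ρ = ρ := by
  have h0 := (le_iff.mp hM).mul_eq_zero_of_trace_mul_eq_zero hρ
    (by rw [Matrix.sub_mul, Matrix.one_mul, trace_sub, h, sub_self])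
  rwa [Matrix.sub_mul, Matrix.one_mul, sub_eq_zero, eq_comm] at h0

lemma mul_eq_self_of_le_of_le_one {N M ρ : Matrix n n 𝕜} (hρ : ρ.PosSemidef) (hNM : N ≤ M)
    (hM : M ≤ 1) (hN : N * ρ = ρ) : M * ρ = ρ := by
  have hM' := (le_iff.mp hM).trace_mul_nonneg hρ
  have hNM' := (le_iff.mp hNM).trace_mul_nonneg hρ
  rw [Matrix.sub_mul, Matrix.one_mul, trace_sub, sub_nonneg] at hM'
  rw [Matrix.sub_mul, trace_sub, hN, sub_nonneg] at hNM'
  exact mul_eq_self_of_le_one_of_trace_mul_eq hρ hM (le_antisymm hM' hNM')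

lemma mul_self_mul_eq_self_of_mul_mul_eq_self {W X ρ : Matrix n n 𝕜} (hρ : ρ.PosSemidef)
    (hX : X.IsHermitian) (hW1 : W * W ≤ 1) (hX1 : X * X ≤ 1) (hWX : Commute W X)
    (h : W * X * ρ = ρ) : X * X * ρ = ρ := by
  have hsq : W * W * (X * X) * ρ = ρ := by
    rw [hWX.mul_mul_mul_comm, Matrix.mul_assoc (W * X), h, h]
  refine mul_eq_self_of_le_of_le_one hρ (N := W * W * (X * X)) ?_ hX1 hsq
  rw [← sub_nonneg, ← one_sub_mul]
  exact Commute.mul_nonneg (sub_nonneg.mpr hW1) hX.isSelfAdjoint.mul_self_nonneg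
    ((Commute.one_left _).sub_left ((hWX.mul_left hWX).mul_right (hWX.mul_left hWX)))

theorem trace_cross_correlations_eq {W X : Fin 2 → Matrix n n 𝕜} {ρ : Matrix n n 𝕜}
    (hρ : ρ.PosSemidef) (hW : ∀ x, (W x).IsHermitian) (hX : ∀ y, (X y).IsHermitian)
    (hW1 : ∀ x, W x * W x ≤ 1) (hX1 : ∀ y, X y * X y ≤ 1) (hWX : ∀ x y, Commute (W x) (X y))
    (h₀₀ : (W 0 * X 0 * ρ).trace = ρ.trace) (h₁₁ : (W 1 * X 1 * ρ).trace = ρ.trace) :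
    (W 0 * X 1 * ρ).trace = (W 1 * X 0 * ρ).trace := by
  have hfix : ∀ x, (W x * X x * ρ).trace = ρ.trace → W x * X x * ρ = ρ := fun x h ↦
    mul_eq_self_of_le_one_of_trace_mul_eq hρ
      (mul_le_one_of_commute (hW x) (hX x) (hW1 x) (hX1 x) (hWX x x)) h
  have h₀ := hfix 0 h₀₀
  have h₁ := hfix 1 h₁₁
  have hsq : ∀ x, W x * X x * ρ = ρ → X x * X x * ρ = ρ := fun x ↦
    mul_self_mul_eq_self_of_mul_mul_eq_self hρ (hX x) (hW1 x) (hX1 x) (hWX x x)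
  have h₀' : ρ * (W 0 * X 0) = ρ := by
    simpa [conjTranspose_mul, hρ.1.eq, (hW 0).eq, (hX 0).eq, ← (hWX 0 0).eq, Matrix.mul_assoc]
      using congrArg conjTranspose h₀
  calc (W 0 * X 1 * ρ).trace = (W 0 * X 1 * (W 1 * X 1 * ρ)).trace := by rw [h₁]
    _ = (W 0 * W 1 * (X 1 * X 1 * ρ)).trace := by
        simp only [← Matrix.mul_assoc]
        rw [Matrix.mul_assoc (W 0), ← (hWX 1 1).eq, ← Matrix.mul_assoc]
    _ = (W 0 * W 1 * (X 0 * X 0 * ρ)).trace := by rw [hsq 1 h₁, hsq 0 h₀]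
    _ = (W 0 * X 0 * (W 1 * X 0 * ρ)).trace := by
        simp only [← Matrix.mul_assoc]
        rw [Matrix.mul_assoc (W 0), (hWX 1 0).eq, ← Matrix.mul_assoc]
    _ = (W 1 * X 0 * (ρ * (W 0 * X 0))).trace := by
        rw [← Matrix.mul_assoc, trace_mul_comm, trace_mul_comm (W 1 * X 0)]
        simp only [Matrix.mul_assoc]
    _ = (W 1 * X 0 * ρ).trace := by rw [h₀']

theorem trace_kronecker_cross_correlations_eq [DecidableEq m] {A : Fin 2 → Matrix m m 𝕜}
    {B : Fin 2 → Matrix n n 𝕜} {ρ : Matrix (m × n) (m × n) 𝕜} (hρ : ρ.PosSemidef)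
    (hA : ∀ x, (A x).IsHermitian) (hB : ∀ y, (B y).IsHermitian)
    (hA1 : ∀ x, A x * A x ≤ 1) (hB1 : ∀ y, B y * B y ≤ 1)
    (h₀₀ : (A 0 ⊗ₖ B 0 * ρ).trace = ρ.trace) (h₁₁ : (A 1 ⊗ₖ B 1 * ρ).trace = ρ.trace) :
    (A 0 ⊗ₖ B 1 * ρ).trace = (A 1 ⊗ₖ B 0 * ρ).trace := by
  have hprod : ∀ x y, A x ⊗ₖ (1 : Matrix n n 𝕜) * ((1 : Matrix m m 𝕜) ⊗ₖ B y) = A x ⊗ₖ B y :=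
    fun x y ↦ by rw [← mul_kronecker_mul, Matrix.mul_one, Matrix.one_mul]
  have hW1 : ∀ x, A x ⊗ₖ (1 : Matrix n n 𝕜) * (A x ⊗ₖ 1) ≤ 1 := fun x ↦ by
    rw [← mul_kronecker_mul, Matrix.one_mul, ← one_kronecker_one]
    exact kronecker_le_kronecker_left (hA1 x) zero_le_one
  have hX1 : ∀ y, (1 : Matrix m m 𝕜) ⊗ₖ B y * (1 ⊗ₖ B y) ≤ 1 := fun y ↦ by
    rw [← mul_kronecker_mul, Matrix.one_mul, ← one_kronecker_one]
    exact kronecker_le_kronecker_right zero_le_one (hB1 y)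
  have hWX : ∀ x y, Commute (A x ⊗ₖ (1 : Matrix n n 𝕜)) ((1 : Matrix m m 𝕜) ⊗ₖ B y) :=
    fun x y ↦ by
      simp only [Commute, SemiconjBy, ← mul_kronecker_mul, Matrix.mul_one, Matrix.one_mul]
  have key := trace_cross_correlations_eq (W := fun x ↦ A x ⊗ₖ (1 : Matrix n n 𝕜))
    (X := fun y ↦ (1 : Matrix m m 𝕜) ⊗ₖ B y) hρ (fun x ↦ (hA x).kronecker isHermitian_one)
    (fun y ↦ isHermitian_one.kronecker (hB y)) hW1 hX1 hWX
    (by simpa only [hprod] using h₀₀) (by simpa only [hprod] using h₁₁)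
  simpa only [hprod] using key

end Matrix

theorem IsQuantum.noSignaling {nA nB nX nY : ℕ} {p : Fin nA → Fin nB → Fin nX → Fin nY → ℝ}
    (hq : IsQuantum p) : NoSignaling p := by
  obtain ⟨dA, dB, -, -, ρ, E, F, -, -, -, hE, -, hF, hp⟩ := hq
  have hA : ∀ a x y, ((∑ b, p a b x y : ℝ) : ℂ) = ((E x a ⊗ₖ 1) * ρ).trace := fun a x y ↦ by
    rw [← hF y, Matrix.kronecker_sum, Matrix.sum_mul, trace_sum]
    push_cast
    simp [hp]
  have hB : ∀ b x y, ((∑ a, p a b x y : ℝ) : ℂ) = ((1 ⊗ₖ F y b) * ρ).trace := fun b x y ↦ by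
    rw [← hE x, Matrix.sum_kronecker, Matrix.sum_mul, trace_sum]
    push_cast
    simp [hp]
  exact ⟨fun b y x x' ↦ by exact_mod_cast (hB b x y).trans (hB b x' y).symm,
    fun a x y y' ↦ by exact_mod_cast (hA a x y).trans (hA a x y').symm⟩

/-- Tsirelson-type constraint on the correlators of a two-input two-output quantum box:
if `c₀₀ = c₁₁ = 1` then `c₀₁ = c₁₀`; in particular, a quantum box with
`p(0,1|0,0) = p(1,0|0,0) = p(0,1|1,1) = p(1,0|1,1) = 0` satisfies
`p(0,1|0,1) - p(0,1|1,0) = p(0,0|0,0) - p(0,0|1,1)`. -/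
theorem quantum_correlator_constraint
    (p : Fin 2 → Fin 2 → Fin 2 → Fin 2 → ℝ)
    (hbox : IsBox p) (hq : IsQuantum p)
    (c : Fin 2 → Fin 2 → ℝ)
    (hc : ∀ x y, c x y = p 0 0 x y + p 1 1 x y - p 0 1 x y - p 1 0 x y) :
    ((c 0 0 = 1 ∧ c 1 1 = 1) → c 0 1 = c 1 0) ∧
    ((p 0 1 0 0 = 0 ∧ p 1 0 0 0 = 0 ∧ p 0 1 1 1 = 0 ∧ p 1 0 1 1 = 0) →
      p 0 1 0 1 - p 0 1 1 0 = p 0 0 0 0 - p 0 0 1 1) := by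
  obtain ⟨-, hnorm⟩ := hbox
  obtain ⟨hsig₁, hsig₂⟩ := hq.noSignaling
  obtain ⟨dA, dB, -, -, ρ, E, F, hρ, hρtr, hE, hEsum, hF, hFsum, hp⟩ := hq
  simp only [Fin.sum_univ_two] at hEsum hFsum hsig₁ hsig₂ hnorm
  have hcorr : ∀ x y, ((E x 0 - E x 1) ⊗ₖ (F y 0 - F y 1) * ρ).trace = c x y := fun x y ↦ by
    simp only [sub_kronecker, kronecker_sub, Matrix.sub_mul, trace_sub, hp, hc]
    push_cast
    ring
  have hperfect : c 0 0 = 1 ∧ c 1 1 = 1 → c 0 1 = c 1 0 := fun ⟨h₀₀, h₁₁⟩ ↦ by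
    have h := trace_kronecker_cross_correlations_eq hρ
      (fun x ↦ (hE x 0).1.sub (hE x 1).1) (fun y ↦ (hF y 0).1.sub (hF y 1).1)
      (fun x ↦ sub_mul_self_le_one_of_add_eq_one (hE x 0).nonneg (hE x 1).nonneg (hEsum x))
      (fun y ↦ sub_mul_self_le_one_of_add_eq_one (hF y 0).nonneg (hF y 1).nonneg (hFsum y))
      (by rw [hcorr, h₀₀, hρtr, Complex.ofReal_one]) (by rw [hcorr, h₁₁, hρtr, Complex.ofReal_one])
    rw [hcorr, hcorr] at h
    exact_mod_cast h
  refine ⟨hperfect, fun ⟨h₀₁, h₁₀, h₀₁', h₁₀'⟩ ↦ ?_⟩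
  have h := hperfect ⟨by rw [hc]; linarith [hnorm 0 0], by rw [hc]; linarith [hnorm 1 1]⟩
  rw [hc, hc] at h
  linarith [hnorm 0 1, hnorm 1 0, hsig₁ 0 1 0 1, hsig₁ 0 0 1 0, hsig₂ 0 0 0 1, hsig₂ 0 1 1 0]
end

section
/- Let p(a,b|x,y), a,b,x,y ∈ {0,1}, be a family of nonnegative real numbers with Σ_{a,b} p(a,b|x,y) = 1 for every x,y. Then p is no-signaling if and only if there exists a function P : {0,1}⁴ → ℝ (a quasi-probability distribution over instruction sets ω_{a₀a₁b₀b₁}, allowed to take negative values) such that for all a,b,x,y: Σ over all (a₀,a₁,b₀,b₁) with a_x = a and b_y = b of P(a₀,a₁,b₀,b₁) equals p(a,b|x,y). -/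
open Kronecker ComplexOrder

/-!
A single party's family `q(a|x)`, `x ∈ {0,1}`, `m` outputs, whose total mass `T` is the same for
both inputs is the marginal of the quasi-distribution `Q(a₀,a₁) = (q(a₀|0) + q(a₁|1) - T/m)/m` on
instruction sets: summing out the free coordinate contributes `T/m`, which the correction cancels.
This lift is linear in `q`. Lifting `p(·,b|·,y)` on Alice's side is legitimate by her no-signaling
condition; by linearity the result inherits Bob's condition, so it can be lifted on his side too.
Conversely, summing a quasi-model over one party's output removes the constraint on that party's
input.
-/

section InstructionSets

variable {A : Type*} [Fintype A]

noncomputable def instructionLift (q : A → Fin 2 → ℝ) (a0 a1 : A) : ℝ :=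
  (q a0 0 + q a1 1 - (∑ a, q a 0) / Fintype.card A) / Fintype.card A

lemma instructionLift_sum {ι : Type*} (s : Finset ι) (q : ι → A → Fin 2 → ℝ) (a0 a1 : A) :
    ∑ i ∈ s, instructionLift (q i) a0 a1 =
      instructionLift (fun a x => ∑ i ∈ s, q i a x) a0 a1 := by
  simp only [instructionLift, ← Finset.sum_div, Finset.sum_sub_distrib, Finset.sum_add_distrib]
  rw [Finset.sum_comm]

variable [DecidableEq A]

def instructionMarginal (Q : A → A → ℝ) (a : A) (x : Fin 2) : ℝ :=
  ∑ a0, ∑ a1, if ![a0, a1] x = a then Q a0 a1 else 0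

lemma instructionMarginal_zero (Q : A → A → ℝ) (a : A) :
    instructionMarginal Q a 0 = ∑ a1, Q a a1 := by
  rw [instructionMarginal, Finset.sum_eq_single a] <;> simp +contextual

lemma instructionMarginal_one (Q : A → A → ℝ) (a : A) :
    instructionMarginal Q a 1 = ∑ a0, Q a0 a := by
  simp [instructionMarginal]

lemma sum_instructionMarginal (Q : A → A → ℝ) (x : Fin 2) :
    ∑ a, instructionMarginal Q a x = ∑ a0, ∑ a1, Q a0 a1 := by
  fin_cases x
  · simp [instructionMarginal_zero]
  · simp only [Fin.mk_one, instructionMarginal_one]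
    exact Finset.sum_comm

lemma instructionMarginal_sum {ι : Type*} (s : Finset ι) (Q : ι → A → A → ℝ) (a : A)
    (x : Fin 2) :
    ∑ i ∈ s, instructionMarginal (Q i) a x =
      instructionMarginal (fun a0 a1 => ∑ i ∈ s, Q i a0 a1) a x := by
  fin_cases x
  · simp only [Fin.zero_eta, instructionMarginal_zero]
    exact Finset.sum_comm
  · simp only [Fin.mk_one, instructionMarginal_one]
    exact Finset.sum_comm

lemma instructionMarginal_instructionLift {q : A → Fin 2 → ℝ}
    (hq : ∑ a, q a 0 = ∑ a, q a 1) (a : A) (x : Fin 2) :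
    instructionMarginal (instructionLift q) a x = q a x := by
  have : Nonempty A := ⟨a⟩
  have hcard : (Fintype.card A : ℝ) ≠ 0 := Nat.cast_ne_zero.mpr Fintype.card_ne_zero
  fin_cases x
  · simp only [Fin.zero_eta, instructionMarginal_zero, instructionLift, ← Finset.sum_div,
      Finset.sum_sub_distrib, Finset.sum_add_distrib, Finset.sum_const, Finset.card_univ,
      nsmul_eq_mul]
    field_simp
    rw [hq]
    ring
  · simp only [Fin.mk_one, instructionMarginal_one, instructionLift, ← Finset.sum_div,
      Finset.sum_sub_distrib, Finset.sum_add_distrib, Finset.sum_const, Finset.card_univ,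
      nsmul_eq_mul]
    field_simp
    ring

end InstructionSets

section QuasiModels

variable {A B : Type*} [Fintype A] [Fintype B] [DecidableEq A] [DecidableEq B]

def quasiBox (P : A → A → B → B → ℝ) (a : A) (b : B) (x y : Fin 2) : ℝ :=
  ∑ a0, ∑ a1, ∑ b0, ∑ b1, if ![a0, a1] x = a ∧ ![b0, b1] y = b then P a0 a1 b0 b1 else 0

lemma quasiBox_eq_instructionMarginal (P : A → A → B → B → ℝ) (a : A) (b : B) (x y : Fin 2) :
    quasiBox P a b x y =
      instructionMarginal (fun a0 a1 => instructionMarginal (P a0 a1) b y) a x := by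
  simp only [quasiBox, instructionMarginal, ite_and]
  refine Finset.sum_congr rfl fun a0 _ => Finset.sum_congr rfl fun a1 _ => ?_
  split_ifs <;> simp

end QuasiModels

theorem noSignaling_quasiBox {nA nB : ℕ} (P : Fin nA → Fin nA → Fin nB → Fin nB → ℝ) :
    NoSignaling (quasiBox P) := by
  constructor
  · intro b y x x'
    simp only [quasiBox_eq_instructionMarginal, sum_instructionMarginal]
  · intro a x y y'
    simp only [quasiBox_eq_instructionMarginal, instructionMarginal_sum, sum_instructionMarginal]

theorem NoSignaling.exists_quasiBox_eq {nA nB : ℕ} {p : Fin nA → Fin nB → Fin 2 → Fin 2 → ℝ}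
    (hp : NoSignaling p) : ∃ P, quasiBox P = p := by
  obtain ⟨hAlice, hBob⟩ := hp
  let R a0 a1 b y := instructionLift (fun a x => p a b x y) a0 a1
  have hR a0 a1 : ∑ b, R a0 a1 b 0 = ∑ b, R a0 a1 b 1 := by
    simp only [R, instructionLift_sum]
    congr
    exact funext fun a => funext fun x => hBob a x 0 1
  refine ⟨fun a0 a1 => instructionLift (R a0 a1), ?_⟩
  ext a b x y
  rw [quasiBox_eq_instructionMarginal]
  simp only [instructionMarginal_instructionLift (hR _ _)]
  exact instructionMarginal_instructionLift (hAlice b y 0 1) a x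

theorem noSignaling_iff_exists_quasiBox_eq {nA nB : ℕ}
    (p : Fin nA → Fin nB → Fin 2 → Fin 2 → ℝ) :
    NoSignaling p ↔ ∃ P, quasiBox P = p :=
  ⟨NoSignaling.exists_quasiBox_eq, fun ⟨P, hP⟩ => hP ▸ noSignaling_quasiBox P⟩

theorem nosignaling_iff_quasiprobability_model_general
    (p : Fin 2 → Fin 2 → Fin 2 → Fin 2 → ℝ) :
    NoSignaling p ↔
      ∃ P : Fin 2 → Fin 2 → Fin 2 → Fin 2 → ℝ,
        ∀ a b x y,
          (∑ a0, ∑ a1, ∑ b0, ∑ b1,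
            if (![a0, a1] x = a ∧ ![b0, b1] y = b) then P a0 a1 b0 b1 else 0)
          = p a b x y := by
  simp only [noSignaling_iff_exists_quasiBox_eq, funext_iff]
  rfl

/-- Proposition A1 of the paper (with its converse): a two-input two-output box is
no-signaling iff it admits a quasi-probability ontological model over instruction sets
`ω_{a₀a₁b₀b₁}` (real weights, possibly negative) reproducing its statistics. -/
theorem nosignaling_iff_quasiprobability_model
    (p : Fin 2 → Fin 2 → Fin 2 → Fin 2 → ℝ)
    (hbox : IsBox p) :
    NoSignaling p ↔
      ∃ P : Fin 2 → Fin 2 → Fin 2 → Fin 2 → ℝ,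
        ∀ a b x y,
          (∑ a0, ∑ a1, ∑ b0, ∑ b1,
            if (![a0, a1] x = a ∧ ![b0, b1] y = b) then P a0 a1 b0 b1 else 0)
          = p a b x y :=
  nosignaling_iff_quasiprobability_model_general p
end
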